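/- Let L : ℝⁿ → ℝ be differentiable with λ-Lipschitz gradient, Ω ⊆ ℝⁿ a nonempty closed convex set, z ∈ Ω, α > 0, and c > λ + α. Define z⁺ := π_Ω(z − (1/c)∇L(z)). Then L(z⁺) + (α/2)‖z⁺ − z‖² ≤ L(z). (Sufficient decrease of a projected gradient step.) -/

import Mathlib

/-!
Along the segment from `z` to `z⁺`, the Lipschitz gradient gives the descent lemma
`L z⁺ ≤ L z + ⟪∇L z, z⁺ - z⟫ + λ/2 ‖z⁺ - z‖²`. The variational characterization of the projection,
tested at the point `z ∈ Ω`, gives `⟪∇L z, z⁺ - z⟫ ≤ -c ‖z⁺ - z‖²`, and `c ≥ λ + α` absorbs the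
quadratic term.
-/

open scoped InnerProductSpace NNReal

variable {E : Type*} [NormedAddCommGroup E] [InnerProductSpace ℝ E]

theorem HasGradientAt.hasDerivAt_comp_add_smul [CompleteSpace E] {f : E → ℝ} {g x v : E} {t : ℝ}
    (h : HasGradientAt f g (x + t • v)) :
    HasDerivAt (fun s : ℝ => f (x + s • v)) ⟪g, v⟫_ℝ t := by
  have hline : HasDerivAt (fun s : ℝ => x + s • v) v t := by
    simpa using ((hasDerivAt_id t).smul_const v).const_add x
  have hcomp := h.hasFDerivAt.comp_hasDerivAt t hline
  rwa [InnerProductSpace.toDual_apply_apply] at hcomp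

theorem LipschitzWith.inner_sub_le_of_add_smul {f' : E → E} {K : ℝ≥0} (hK : LipschitzWith K f')
    (x v : E) {t : ℝ} (ht : 0 ≤ t) :
    ⟪f' (x + t • v) - f' x, v⟫_ℝ ≤ K * t * ‖v‖ ^ 2 :=
  calc ⟪f' (x + t • v) - f' x, v⟫_ℝ ≤ ‖f' (x + t • v) - f' x‖ * ‖v‖ := real_inner_le_norm _ _
    _ ≤ K * ‖t • v‖ * ‖v‖ := by
      gcongr
      simpa using hK.norm_sub_le (x + t • v) x
    _ = K * t * ‖v‖ ^ 2 := by rw [norm_smul, Real.norm_of_nonneg ht]; ring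

theorem le_add_inner_add_of_lipschitzWith_gradient [CompleteSpace E] {f : E → ℝ} {f' : E → E}
    {K : ℝ≥0} (hf : ∀ x, HasGradientAt f (f' x) x) (hK : LipschitzWith K f') (x y : E) :
    f y ≤ f x + ⟪f' x, y - x⟫_ℝ + K / 2 * ‖y - x‖ ^ 2 := by
  set v := y - x
  set g : ℝ → ℝ := fun t => f (x + t • v) - t * ⟪f' x, v⟫_ℝ - K / 2 * t ^ 2 * ‖v‖ ^ 2
  have hg : ∀ t, HasDerivAt g (⟪f' (x + t • v) - f' x, v⟫_ℝ - K * t * ‖v‖ ^ 2) t := by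
    intro t
    have hquad : HasDerivAt (fun s : ℝ => K / 2 * s ^ 2 * ‖v‖ ^ 2) (K * t * ‖v‖ ^ 2) t := by
      refine (((hasDerivAt_pow 2 t).const_mul (K / 2 : ℝ)).mul_const (‖v‖ ^ 2)).congr_deriv ?_
      push_cast
      ring
    refine ((((hf (x + t • v)).hasDerivAt_comp_add_smul).sub
      ((hasDerivAt_id t).mul_const ⟪f' x, v⟫_ℝ)).sub hquad).congr_deriv ?_
    rw [inner_sub_left, one_mul]
  have hanti : AntitoneOn g (Set.Ici 0) :=
    antitoneOn_of_hasDerivWithinAt_nonpos (convex_Ici 0)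
      (fun t _ => (hg t).continuousAt.continuousWithinAt) (fun t _ => (hg t).hasDerivWithinAt)
      (fun t ht => sub_nonpos.2 (hK.inner_sub_le_of_add_smul x v (interior_subset ht)))
  have hg01 : g 1 ≤ g 0 := hanti Set.self_mem_Ici (Set.mem_Ici.2 zero_le_one) zero_le_one
  simp only [g, one_smul, zero_smul, add_zero, one_mul, one_pow, zero_mul, zero_pow two_ne_zero,
    mul_zero, sub_zero, v, add_sub_cancel] at hg01
  linarith

theorem Convex.inner_sub_nonpos_of_isMinOn {K : Set E} (hK : Convex ℝ K) {u v w : E}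
    (hv : v ∈ K) (hw : w ∈ K) (hmin : IsMinOn (fun x => ‖u - x‖) K v) :
    ⟪u - v, w - v⟫_ℝ ≤ 0 :=
  have : Nonempty K := ⟨⟨v, hv⟩⟩
  (norm_eq_iInf_iff_real_inner_le_zero hK hv).1 (hmin.iInf_eq hv).symm w hw

theorem Convex.inner_sub_le_of_isMinOn_norm_sub_smul {Ω : Set E} (hΩ : Convex ℝ Ω) {g z zp : E}
    {c : ℝ} (hc : 0 < c) (hz : z ∈ Ω) (hzp : zp ∈ Ω)
    (hmin : IsMinOn (fun x => ‖(z - (1 / c) • g) - x‖) Ω zp) :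
    ⟪g, zp - z⟫_ℝ ≤ -(c * ‖zp - z‖ ^ 2) := by
  have hvar := hΩ.inner_sub_nonpos_of_isMinOn hzp hz hmin
  have hexpand : ⟪(z - (1 / c) • g) - zp, z - zp⟫_ℝ = ‖zp - z‖ ^ 2 + (1 / c) * ⟪g, zp - z⟫_ℝ := by
    rw [show (z - (1 / c) • g) - zp = -(zp - z) - (1 / c) • g by abel,
      show z - zp = -(zp - z) by abel, inner_sub_left, real_inner_smul_left, inner_neg_neg,
      inner_neg_right, real_inner_self_eq_norm_sq]
    ring
  rw [hexpand] at hvar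
  have := mul_le_mul_of_nonneg_left hvar hc.le
  field_simp at this
  linarith

theorem projected_gradient_sufficient_decrease_general {n : ℕ}
    (L : EuclideanSpace ℝ (Fin n) → ℝ)
    (L' : EuclideanSpace ℝ (Fin n) → EuclideanSpace ℝ (Fin n))
    (lam α c : ℝ) (hlam : 0 ≤ lam) (hα : 0 < α) (hc : c > lam + α)
    (hgrad : ∀ x, HasGradientAt L (L' x) x)
    (hlip : LipschitzWith (Real.toNNReal lam) L')
    (Ω : Set (EuclideanSpace ℝ (Fin n)))
    (hconv : Convex ℝ Ω)
    (z zp : EuclideanSpace ℝ (Fin n)) (hz : z ∈ Ω) (hzp : zp ∈ Ω)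
    (hproj : ∀ x ∈ Ω, ‖(z - (1 / c) • L' z) - zp‖ ≤ ‖(z - (1 / c) • L' z) - x‖) :
    L zp + α / 2 * ‖zp - z‖ ^ 2 ≤ L z := by
  have hdescent := le_add_inner_add_of_lipschitzWith_gradient hgrad hlip z zp
  rw [Real.coe_toNNReal lam hlam] at hdescent
  have hstep := hconv.inner_sub_le_of_isMinOn_norm_sub_smul (by linarith) hz hzp
    (isMinOn_iff.2 hproj)
  have hslack : 0 ≤ (c - (lam + α) / 2) * ‖zp - z‖ ^ 2 :=
    mul_nonneg (by linarith) (sq_nonneg _)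
  linarith

/-- Sufficient decrease of a projected gradient step: if `∇L` is `lam`-Lipschitz,
`c > lam + α`, `z ∈ Ω` and `z⁺ = π_Ω(z - (1/c)∇L(z))`, then
`L(z⁺) + α/2 ‖z⁺ - z‖² ≤ L(z)`. -/
theorem projected_gradient_sufficient_decrease {n : ℕ}
    (L : EuclideanSpace ℝ (Fin n) → ℝ)
    (L' : EuclideanSpace ℝ (Fin n) → EuclideanSpace ℝ (Fin n))
    (lam α c : ℝ) (hlam : 0 ≤ lam) (hα : 0 < α) (hc : c > lam + α)
    (hgrad : ∀ x, HasGradientAt L (L' x) x)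
    (hlip : LipschitzWith (Real.toNNReal lam) L')
    (Ω : Set (EuclideanSpace ℝ (Fin n))) (hne : Ω.Nonempty) (hcl : IsClosed Ω)
    (hconv : Convex ℝ Ω)
    (z zp : EuclideanSpace ℝ (Fin n)) (hz : z ∈ Ω) (hzp : zp ∈ Ω)
    (hproj : ∀ x ∈ Ω, ‖(z - (1 / c) • L' z) - zp‖ ≤ ‖(z - (1 / c) • L' z) - x‖) :
    L zp + α / 2 * ‖zp - z‖ ^ 2 ≤ L z :=
  projected_gradient_sufficient_decrease_general L L' lam α c hlam hα hc hgrad hlip Ω hconv z zp hz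
    hzp hproj
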